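/- Let A ∈ ℝ^{n×n} be invertible, b ∈ ℝⁿ, γ ∈ (0,2), θ ∈ [0,1). Suppose x* satisfies Ax* − |x*| − b = 0 and ‖A^{-1}‖ < 1/[θ((2 − γ/2)‖A‖ + 1) + 2(1 − γ/2)‖A‖ + 1]. Then any sequence {x^k} in ℝⁿ satisfying the inexact Douglas–Rachford condition ‖(2/γ)A x^{k+1} − [((2/γ) − 1)A x^k + |x^k| + b]‖ ≤ θ‖Ax^k − |x^k| − b‖ for all k ≥ 0 converges linearly to x* from any starting point x^0. -/

import Mathlib

open Matrix Filter

/-- Componentwise absolute value of a vector in Euclidean space. -/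
noncomputable def vabs {n : ℕ} (x : EuclideanSpace ℝ (Fin n)) : EuclideanSpace ℝ (Fin n) :=
  WithLp.toLp 2 (fun i => |x i|)

/-- A matrix acting on Euclidean space (so that vector norms are the Euclidean 2-norm). -/
noncomputable def mulV {n : ℕ} (M : Matrix (Fin n) (Fin n) ℝ) (x : EuclideanSpace ℝ (Fin n)) :
    EuclideanSpace ℝ (Fin n) :=
  Matrix.toEuclideanCLM (𝕜 := ℝ) M x

/-- Spectral norm of a real matrix: the operator norm induced by the Euclidean vector norm. -/
noncomputable def spec {n : ℕ} (M : Matrix (Fin n) (Fin n) ℝ) : ℝ :=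
  ‖Matrix.toEuclideanCLM (𝕜 := ℝ) M‖

/-- The GAVE residual function `F(x) = A x − B |x| − b`. -/
noncomputable def gaveF {n : ℕ} (A B : Matrix (Fin n) (Fin n) ℝ)
    (b : EuclideanSpace ℝ (Fin n)) (x : EuclideanSpace ℝ (Fin n)) : EuclideanSpace ℝ (Fin n) :=
  mulV A x - mulV B (vabs x) - b

/-- The AVE residual function `A x − |x| − b` (the GAVE with `B = I`). -/
noncomputable def aveF {n : ℕ} (A : Matrix (Fin n) (Fin n) ℝ)
    (b : EuclideanSpace ℝ (Fin n)) (x : EuclideanSpace ℝ (Fin n)) : EuclideanSpace ℝ (Fin n) :=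
  mulV A x - vabs x - b

/-- A sequence converges linearly to `xs`: the distances to `xs` contract by a fixed
factor `c < 1` at every step, and the sequence tends to `xs`. -/
def ConvergesLinearlyTo {n : ℕ} (x : ℕ → EuclideanSpace ℝ (Fin n))
    (xs : EuclideanSpace ℝ (Fin n)) : Prop :=
  (∃ c : ℝ, 0 ≤ c ∧ c < 1 ∧ ∀ k : ℕ, ‖x (k + 1) - xs‖ ≤ c * ‖x k - xs‖) ∧
    Tendsto x atTop (nhds xs)

/-
Since `A x* − |x*| = b`, the Douglas–Rachford condition says that
`A (x^{k+1} − x*) = (γ/2) (e_k + (2/γ − 1) A (x^k − x*) + (|x^k| − |x*|))` for an error `e_k`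
with `‖e_k‖ ≤ θ ‖A x^k − |x^k| − b‖ ≤ θ (‖A‖ + 1) ‖x^k − x*‖`, because `|·|` is 1-Lipschitz.
Applying `A⁻¹` gives `‖x^{k+1} − x*‖ ≤ c ‖x^k − x*‖` with
`c = ‖A⁻¹‖ ((γ/2) (θ (‖A‖ + 1) + 1) + (1 − γ/2) ‖A‖)`, and the hypothesis on `‖A⁻¹‖` forces `c < 1`.
-/

section

variable {n : ℕ}

lemma norm_vabs_sub_vabs_le (x y : EuclideanSpace ℝ (Fin n)) :
    ‖vabs x - vabs y‖ ≤ ‖x - y‖ := by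
  rw [EuclideanSpace.norm_eq, EuclideanSpace.norm_eq]
  gcongr with i
  simp only [vabs, PiLp.sub_apply, Real.norm_eq_abs]
  exact abs_abs_sub_abs_le_abs_sub _ _

lemma mulV_sub (M : Matrix (Fin n) (Fin n) ℝ) (x y : EuclideanSpace ℝ (Fin n)) :
    mulV M (x - y) = mulV M x - mulV M y :=
  map_sub _ _ _

lemma smul_mulV (s : ℝ) (M : Matrix (Fin n) (Fin n) ℝ) (x : EuclideanSpace ℝ (Fin n)) :
    mulV (s • M) x = s • mulV M x := by
  simp [mulV]

lemma mulV_smul (M : Matrix (Fin n) (Fin n) ℝ) (s : ℝ) (x : EuclideanSpace ℝ (Fin n)) :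
    mulV M (s • x) = s • mulV M x :=
  map_smul _ _ _

lemma norm_mulV_le (M : Matrix (Fin n) (Fin n) ℝ) (x : EuclideanSpace ℝ (Fin n)) :
    ‖mulV M x‖ ≤ spec M * ‖x‖ :=
  (Matrix.toEuclideanCLM (𝕜 := ℝ) M).le_opNorm x

lemma spec_nonneg (M : Matrix (Fin n) (Fin n) ℝ) : 0 ≤ spec M :=
  norm_nonneg _

lemma mulV_inv_mulV {A : Matrix (Fin n) (Fin n) ℝ} (hA : IsUnit A)
    (x : EuclideanSpace ℝ (Fin n)) : mulV A⁻¹ (mulV A x) = x := by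
  have hinv : A⁻¹ * A = 1 := Matrix.nonsing_inv_mul A ((Matrix.isUnit_iff_isUnit_det A).mp hA)
  change (Matrix.toEuclideanCLM (𝕜 := ℝ) A⁻¹ * Matrix.toEuclideanCLM (𝕜 := ℝ) A) x = x
  rw [← map_mul, hinv, map_one]
  rfl

lemma eq_mulV_sub_vabs_of_aveF_eq_zero {A : Matrix (Fin n) (Fin n) ℝ}
    {b xs : EuclideanSpace ℝ (Fin n)} (hxs : aveF A b xs = 0) : b = mulV A xs - vabs xs := by
  rw [aveF, sub_eq_zero] at hxs
  exact hxs.symm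

lemma aveF_eq_of_aveF_eq_zero {A : Matrix (Fin n) (Fin n) ℝ} {b xs : EuclideanSpace ℝ (Fin n)}
    (hxs : aveF A b xs = 0) (y : EuclideanSpace ℝ (Fin n)) :
    aveF A b y = mulV A (y - xs) - (vabs y - vabs xs) := by
  rw [aveF, eq_mulV_sub_vabs_of_aveF_eq_zero hxs, mulV_sub]
  abel

lemma norm_aveF_le {A : Matrix (Fin n) (Fin n) ℝ} {b xs : EuclideanSpace ℝ (Fin n)}
    (hxs : aveF A b xs = 0) (y : EuclideanSpace ℝ (Fin n)) :
    ‖aveF A b y‖ ≤ (spec A + 1) * ‖y - xs‖ := by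
  rw [aveF_eq_of_aveF_eq_zero hxs]
  calc ‖mulV A (y - xs) - (vabs y - vabs xs)‖
      ≤ ‖mulV A (y - xs)‖ + ‖vabs y - vabs xs‖ := norm_sub_le _ _
    _ ≤ spec A * ‖y - xs‖ + ‖y - xs‖ := add_le_add (norm_mulV_le _ _) (norm_vabs_sub_vabs_le _ _)
    _ = (spec A + 1) * ‖y - xs‖ := by ring

lemma convergesLinearlyTo_of_norm_sub_le {x : ℕ → EuclideanSpace ℝ (Fin n)}
    {xs : EuclideanSpace ℝ (Fin n)} {c : ℝ} (hc0 : 0 ≤ c) (hc1 : c < 1)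
    (hx : ∀ k, ‖x (k + 1) - xs‖ ≤ c * ‖x k - xs‖) : ConvergesLinearlyTo x xs := by
  refine ⟨⟨c, hc0, hc1, hx⟩, ?_⟩
  rw [tendsto_iff_norm_sub_tendsto_zero]
  have hgeom : Tendsto (fun k ↦ c ^ k * ‖x 0 - xs‖) atTop (nhds 0) := by
    simpa using (tendsto_pow_atTop_nhds_zero_of_lt_one hc0 hc1).mul_const ‖x 0 - xs‖
  exact squeeze_zero (fun _ ↦ norm_nonneg _)
    (fun k ↦ le_geom (u := fun k ↦ ‖x k - xs‖) hc0 k fun j _ ↦ hx j) hgeom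

/-- How far `y'` is from being the exact Douglas–Rachford update of `y`. -/
noncomputable def drResidual (A : Matrix (Fin n) (Fin n) ℝ) (b : EuclideanSpace ℝ (Fin n))
    (γ : ℝ) (y y' : EuclideanSpace ℝ (Fin n)) : EuclideanSpace ℝ (Fin n) :=
  mulV ((2 / γ) • A) y' - (mulV ((2 / γ - 1) • A) y + vabs y + b)

lemma mulV_sub_eq_drResidual {A : Matrix (Fin n) (Fin n) ℝ} {b xs : EuclideanSpace ℝ (Fin n)}
    (hxs : aveF A b xs = 0) {γ : ℝ} (hγ : γ ≠ 0) (y y' : EuclideanSpace ℝ (Fin n)) :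
    mulV A (y' - xs) = (γ / 2) • (drResidual A b γ y y' +
      (2 / γ - 1) • mulV A (y - xs) + (vabs y - vabs xs)) := by
  rw [drResidual, eq_mulV_sub_vabs_of_aveF_eq_zero hxs]
  simp only [mulV_sub, smul_mulV]
  match_scalars <;> field_simp <;> ring

lemma norm_sub_le_of_norm_drResidual_le {A : Matrix (Fin n) (Fin n) ℝ} (hA : IsUnit A)
    {b xs : EuclideanSpace ℝ (Fin n)} (hxs : aveF A b xs = 0) {γ θ : ℝ} (hγ0 : 0 < γ)
    (hγ2 : γ ≤ 2) (hθ0 : 0 ≤ θ) {y y' : EuclideanSpace ℝ (Fin n)}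
    (hres : ‖drResidual A b γ y y'‖ ≤ θ * ‖aveF A b y‖) :
    ‖y' - xs‖ ≤
      spec A⁻¹ * (γ / 2 * (θ * (spec A + 1) + 1) + (1 - γ / 2) * spec A) * ‖y - xs‖ := by
  set v := drResidual A b γ y y' + (2 / γ - 1) • mulV A (y - xs) + (vabs y - vabs xs)
  have hω : 0 ≤ 2 / γ - 1 := by rw [sub_nonneg, le_div_iff₀ hγ0]; linarith
  have hy' : y' - xs = (γ / 2) • mulV A⁻¹ v := by
    rw [← mulV_smul, ← mulV_sub_eq_drResidual hxs hγ0.ne', mulV_inv_mulV hA]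
  have hv : ‖v‖ ≤ (θ * (spec A + 1) + (2 / γ - 1) * spec A + 1) * ‖y - xs‖ := by
    calc ‖v‖ ≤ ‖drResidual A b γ y y'‖ + ‖(2 / γ - 1) • mulV A (y - xs)‖ +
          ‖vabs y - vabs xs‖ := norm_add₃_le
      _ ≤ θ * ((spec A + 1) * ‖y - xs‖) + (2 / γ - 1) * (spec A * ‖y - xs‖) + ‖y - xs‖ := by
          rw [norm_smul, Real.norm_of_nonneg hω]
          gcongr
          · exact hres.trans (by gcongr; exact norm_aveF_le hxs y)
          · exact norm_mulV_le _ _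
          · exact norm_vabs_sub_vabs_le _ _
      _ = (θ * (spec A + 1) + (2 / γ - 1) * spec A + 1) * ‖y - xs‖ := by ring
  calc ‖y' - xs‖ ≤ γ / 2 * (spec A⁻¹ * ‖v‖) := by
        rw [hy', norm_smul, Real.norm_of_nonneg (by positivity)]
        gcongr
        exact norm_mulV_le _ _
    _ ≤ γ / 2 * (spec A⁻¹ * ((θ * (spec A + 1) + (2 / γ - 1) * spec A + 1) * ‖y - xs‖)) := by
        gcongr
        exact spec_nonneg _
    _ = spec A⁻¹ * (γ / 2 * (θ * (spec A + 1) + 1) + (1 - γ / 2) * spec A) * ‖y - xs‖ := by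
        field_simp
        ring

end

lemma mul_rate_lt_one {a ai γ θ : ℝ} (ha : 0 ≤ a) (hai : 0 ≤ ai) (hγ2 : γ ≤ 2) (hθ0 : 0 ≤ θ)
    (h : ai < 1 / (θ * ((2 - γ / 2) * a + 1) + 2 * (1 - γ / 2) * a + 1)) :
    ai * (γ / 2 * (θ * (a + 1) + 1) + (1 - γ / 2) * a) < 1 := by
  set D := θ * ((2 - γ / 2) * a + 1) + 2 * (1 - γ / 2) * a + 1
  have hγ : 0 ≤ 1 - γ / 2 := by linarith
  have hD : 0 < D := by
    have hθa : 0 ≤ θ * ((2 - γ / 2) * a + 1) := mul_nonneg hθ0 (by nlinarith)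
    have h2a : 0 ≤ 2 * (1 - γ / 2) * a := mul_nonneg (by linarith) ha
    simp only [D]
    linarith
  have hdecomp : D = γ / 2 * (θ * (a + 1) + 1) + (1 - γ / 2) * a +
      (1 - γ / 2) * (θ * (2 * a + 1) + a + 1) := by ring
  calc ai * (γ / 2 * (θ * (a + 1) + 1) + (1 - γ / 2) * a) ≤ ai * D := by
        gcongr
        rw [hdecomp, le_add_iff_nonneg_right]
        exact mul_nonneg hγ (by positivity)
    _ < 1 / D * D := by gcongr
    _ = 1 := one_div_mul_cancel hD.ne'

theorem stmt11_general {n : ℕ} (A : Matrix (Fin n) (Fin n) ℝ)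
    (b : EuclideanSpace ℝ (Fin n)) (hA : IsUnit A) (γ θ : ℝ)
    (hγ0 : 0 < γ) (hγ2 : γ < 2) (hθ0 : 0 ≤ θ)
    (xs : EuclideanSpace ℝ (Fin n)) (hxs : aveF A b xs = 0)
    (hcond : spec A⁻¹ <
      1 / (θ * ((2 - γ / 2) * spec A + 1) + 2 * (1 - γ / 2) * spec A + 1))
    (x : ℕ → EuclideanSpace ℝ (Fin n))
    (hx : ∀ k : ℕ, ‖mulV ((2 / γ) • A) (x (k + 1)) -
        (mulV ((2 / γ - 1) • A) (x k) + vabs (x k) + b)‖ ≤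
      θ * ‖aveF A b (x k)‖) :
    ConvergesLinearlyTo x xs := by
  have ha := spec_nonneg A
  have hrate_nonneg :
      0 ≤ spec A⁻¹ * (γ / 2 * (θ * (spec A + 1) + 1) + (1 - γ / 2) * spec A) :=
    mul_nonneg (spec_nonneg _) (add_nonneg (by positivity) (mul_nonneg (by linarith) ha))
  exact convergesLinearlyTo_of_norm_sub_le hrate_nonneg
    (mul_rate_lt_one ha (spec_nonneg _) hγ2.le hθ0 hcond)
    fun k ↦ norm_sub_le_of_norm_drResidual_le hA hxs hγ0 hγ2.le hθ0 (hx k)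

theorem stmt11 {n : ℕ} (A : Matrix (Fin n) (Fin n) ℝ)
    (b : EuclideanSpace ℝ (Fin n)) (hA : IsUnit A) (γ θ : ℝ)
    (hγ0 : 0 < γ) (hγ2 : γ < 2) (hθ0 : 0 ≤ θ) (hθ1 : θ < 1)
    (xs : EuclideanSpace ℝ (Fin n)) (hxs : aveF A b xs = 0)
    (hcond : spec A⁻¹ <
      1 / (θ * ((2 - γ / 2) * spec A + 1) + 2 * (1 - γ / 2) * spec A + 1))
    (x : ℕ → EuclideanSpace ℝ (Fin n))
    (hx : ∀ k : ℕ, ‖mulV ((2 / γ) • A) (x (k + 1)) -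
        (mulV ((2 / γ - 1) • A) (x k) + vabs (x k) + b)‖ ≤
      θ * ‖aveF A b (x k)‖) :
    ConvergesLinearlyTo x xs :=
  stmt11_general A b hA γ θ hγ0 hγ2 hθ0 xs hxs hcond x hx
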